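/- Let D consist of upwards closed dependencies and let φ(x̄, v) be an FO(D)-formula. Then ∃v φ is logically equivalent to (∃v φᶠ) ∧ ∀v (φ ↾ φᶠ). -/

import Mathlib

/-- Formulas of first-order logic with team semantics, in negation normal form,
over a relational signature `σ` (with arities `ar`) extended with dependency
atoms indexed by `δ` (with arities `dar`).  Equality and inequality literals
are between tuples of variables; variables are natural numbers. -/
inductive TForm (σ : Type) (ar : σ → ℕ) (δ : Type) (dar : δ → ℕ) : Type
  | rel (r : σ) (ts : Fin (ar r) → ℕ)
  | nrel (r : σ) (ts : Fin (ar r) → ℕ)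
  | eq (k : ℕ) (x y : Fin k → ℕ)
  | neq (k : ℕ) (x y : Fin k → ℕ)
  | dep (d : δ) (xs : Fin (dar d) → ℕ)
  | and (φ ψ : TForm σ ar δ dar)
  | or (φ ψ : TForm σ ar δ dar)
  | ex (v : ℕ) (φ : TForm σ ar δ dar)
  | all (v : ℕ) (φ : TForm σ ar δ dar)

/-- A team over a model with carrier `M`: a set of assignments. -/
abbrev Team (M : Type) := Set (ℕ → M)

/-- `X(x̄)`: the relation of values of the tuple `x̄` in the team `X`. -/
def Team.rel {M : Type} (X : Team M) {k : ℕ} (xs : Fin k → ℕ) : Set (Fin k → M) :=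
  {t | ∃ s ∈ X, t = fun i => s (xs i)}

/-- An interpretation of a family of dependencies: for each index, an
isomorphism-invariant-style class of pairs (carrier, relation). -/
abbrev DepFam (δ : Type) (dar : δ → ℕ) := ∀ d : δ, ∀ M : Type, Set (Fin (dar d) → M) → Prop

/-- Lax team semantics. -/
def tsat {σ : Type} {ar : σ → ℕ} {δ : Type} {dar : δ → ℕ} {M : Type}
    (RI : ∀ r : σ, Set (Fin (ar r) → M)) (DI : DepFam δ dar) :
    TForm σ ar δ dar → Team M → Prop
  | .rel r ts, X => ∀ s ∈ X, (fun i => s (ts i)) ∈ RI r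
  | .nrel r ts, X => ∀ s ∈ X, (fun i => s (ts i)) ∉ RI r
  | .eq _ x y, X => ∀ s ∈ X, (fun i => s (x i)) = fun i => s (y i)
  | .neq _ x y, X => ∀ s ∈ X, (fun i => s (x i)) ≠ fun i => s (y i)
  | .dep d xs, X => DI d M (X.rel xs)
  | .and φ ψ, X => tsat RI DI φ X ∧ tsat RI DI ψ X
  | .or φ ψ, X => ∃ Y Z, X = Y ∪ Z ∧ tsat RI DI φ Y ∧ tsat RI DI ψ Z
  | .ex v φ, X => ∃ H : (ℕ → M) → Set M, (∀ s ∈ X, (H s).Nonempty) ∧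
      tsat RI DI φ {s' | ∃ s ∈ X, ∃ m ∈ H s, s' = Function.update s v m}
  | .all v φ, X => tsat RI DI φ {s' | ∃ s ∈ X, ∃ m : M, s' = Function.update s v m}

/-- Tarski (single-assignment) semantics; dependency atoms are treated as
trivially true (they are only meaningful for first-order formulas). -/
def ssat {σ : Type} {ar : σ → ℕ} {δ : Type} {dar : δ → ℕ} {M : Type}
    (RI : ∀ r : σ, Set (Fin (ar r) → M)) :
    TForm σ ar δ dar → (ℕ → M) → Prop
  | .rel r ts, s => (fun i => s (ts i)) ∈ RI r
  | .nrel r ts, s => (fun i => s (ts i)) ∉ RI r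
  | .eq _ x y, s => (fun i => s (x i)) = fun i => s (y i)
  | .neq _ x y, s => (fun i => s (x i)) ≠ fun i => s (y i)
  | .dep _ _, _ => True
  | .and φ ψ, s => ssat RI φ s ∧ ssat RI ψ s
  | .or φ ψ, s => ssat RI φ s ∨ ssat RI ψ s
  | .ex v φ, s => ∃ m : M, ssat RI φ (Function.update s v m)
  | .all v φ, s => ∀ m : M, ssat RI φ (Function.update s v m)

/-- A formula is first-order if it contains no dependency atoms. -/
def TForm.isFO {σ : Type} {ar : σ → ℕ} {δ : Type} {dar : δ → ℕ} :
    TForm σ ar δ dar → Prop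
  | .dep _ _ => False
  | .and φ ψ => φ.isFO ∧ ψ.isFO
  | .or φ ψ => φ.isFO ∧ ψ.isFO
  | .ex _ φ => φ.isFO
  | .all _ φ => φ.isFO
  | _ => True

/-- Free variables of a formula. -/
def TForm.free {σ : Type} {ar : σ → ℕ} {δ : Type} {dar : δ → ℕ} :
    TForm σ ar δ dar → Set ℕ
  | .rel _ ts => Set.range ts
  | .nrel _ ts => Set.range ts
  | .eq _ x y => Set.range x ∪ Set.range y
  | .neq _ x y => Set.range x ∪ Set.range y
  | .dep _ xs => Set.range xs
  | .and φ ψ => φ.free ∪ ψ.free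
  | .or φ ψ => φ.free ∪ ψ.free
  | .ex v φ => φ.free \ {v}
  | .all v φ => φ.free \ {v}

/-- The flattening `φᶠ`: replace every dependency atom by the trivially true
atom `⊤` (here rendered as the empty-tuple equality). -/
def TForm.flatten {σ : Type} {ar : σ → ℕ} {δ : Type} {dar : δ → ℕ} :
    TForm σ ar δ dar → TForm σ ar δ dar
  | .dep _ _ => .eq 0 Fin.elim0 Fin.elim0
  | .and φ ψ => .and φ.flatten ψ.flatten
  | .or φ ψ => .or φ.flatten ψ.flatten
  | .ex v φ => .ex v φ.flatten
  | .all v φ => .all v φ.flatten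
  | φ => φ

/-- Negation normal form of the negation of a (first-order) formula. -/
def TForm.neg {σ : Type} {ar : σ → ℕ} {δ : Type} {dar : δ → ℕ} :
    TForm σ ar δ dar → TForm σ ar δ dar
  | .rel r ts => .nrel r ts
  | .nrel r ts => .rel r ts
  | .eq k x y => .neq k x y
  | .neq k x y => .eq k x y
  | .dep d xs => .dep d xs
  | .and φ ψ => .or φ.neg ψ.neg
  | .or φ ψ => .and φ.neg ψ.neg
  | .ex v φ => .all v φ.neg
  | .all v φ => .ex v φ.neg

/-- `(ψ ↾ θ) := (¬θ) ∨ (θ ∧ ψ)`. -/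
def TForm.restrict {σ : Type} {ar : σ → ℕ} {δ : Type} {dar : δ → ℕ}
    (ψ θ : TForm σ ar δ dar) : TForm σ ar δ dar :=
  .or θ.neg (.and θ ψ)

/-- A family of dependencies is upwards closed. -/
def UpClosed {δ : Type} {dar : δ → ℕ} (DI : DepFam δ dar) : Prop :=
  ∀ (d : δ) (M : Type) (R S : Set (Fin (dar d) → M)), R ⊆ S → DI d M R → DI d M S

/-- The constancy dependency of arity `n`. -/
def ConstD (n : ℕ) : ∀ M : Type, Set (Fin n → M) → Prop :=
  fun _ R => ∀ t ∈ R, ∀ t' ∈ R, t = t'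

/-!
First-order formulas are flat: a team satisfies them iff each of its assignments does in Tarski
semantics, and `ψ ↾ θ` with `θ` first-order says that `ψ` holds on the `θ`-part of the team. So the
right-hand side says that every `s ∈ X` has a Tarski witness `m` with `s(m/v) ⊨ φ`, and that `φ` holds
on the `φ`-part of `X[M/v]`; collecting all such witnesses into one supplementing function gives
`∃v φ`. Conversely, a supplement `X[H/v] ⊨ φ` lies inside the `φ`-part of `X[M/v]`, and by upward
closure of the dependencies `φ` passes to any larger team all of whose assignments satisfy it.
-/

namespace Team

variable {M : Type}

/-- `X[H/v]`. -/
def supplement (X : Team M) (v : ℕ) (H : (ℕ → M) → Set M) : Team M :=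
  {s' | ∃ s ∈ X, ∃ m ∈ H s, s' = Function.update s v m}

/-- `X[M/v]`. -/
def duplicate (X : Team M) (v : ℕ) : Team M :=
  {s' | ∃ s ∈ X, ∃ m : M, s' = Function.update s v m}

theorem rel_mono {X Y : Team M} (h : X ⊆ Y) {k : ℕ} (xs : Fin k → ℕ) : X.rel xs ⊆ Y.rel xs := by
  rintro t ⟨s, hs, rfl⟩
  exact ⟨s, h hs, rfl⟩

theorem duplicate_mono {X Y : Team M} (h : X ⊆ Y) (v : ℕ) : X.duplicate v ⊆ Y.duplicate v := by
  rintro s' ⟨s, hs, m, rfl⟩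
  exact ⟨s, h hs, m, rfl⟩

theorem supplement_setOf_update (X : Team M) (v : ℕ) (p : (ℕ → M) → Prop) :
    X.supplement v (fun s => {m | p (Function.update s v m)}) = {s' ∈ X.duplicate v | p s'} := by
  ext s'
  constructor
  · rintro ⟨s, hs, m, hm, rfl⟩
    exact ⟨⟨s, hs, m, rfl⟩, hm⟩
  · rintro ⟨⟨s, hs, m, rfl⟩, hm⟩
    exact ⟨s, hs, m, hm, rfl⟩

end Team

namespace TForm

variable {σ : Type} {ar : σ → ℕ} {δ : Type} {dar : δ → ℕ}

theorem isFO_flatten (φ : TForm σ ar δ dar) : φ.flatten.isFO := by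
  induction φ <;> simp_all [flatten, isFO]

theorem isFO_neg {φ : TForm σ ar δ dar} (h : φ.isFO) : φ.neg.isFO := by
  induction φ <;> simp_all [neg, isFO]

end TForm

section Semantics

variable {σ : Type} {ar : σ → ℕ} {δ : Type} {dar : δ → ℕ} {M : Type}
  {RI : ∀ r : σ, Set (Fin (ar r) → M)} {DI : DepFam δ dar}

theorem tsat_ex {v : ℕ} {φ : TForm σ ar δ dar} {X : Team M} :
    tsat RI DI (.ex v φ) X ↔
      ∃ H : (ℕ → M) → Set M, (∀ s ∈ X, (H s).Nonempty) ∧ tsat RI DI φ (X.supplement v H) :=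
  Iff.rfl

theorem ssat_flatten (φ : TForm σ ar δ dar) (s : ℕ → M) :
    ssat RI φ.flatten s ↔ ssat RI φ s := by
  induction φ generalizing s <;> simp_all [TForm.flatten, ssat]

theorem ssat_neg {φ : TForm σ ar δ dar} (h : φ.isFO) (s : ℕ → M) :
    ssat RI φ.neg s ↔ ¬ ssat RI φ s := by
  induction φ generalizing s <;>
    simp_all [TForm.neg, ssat, TForm.isFO, not_or, Classical.not_forall]
  all_goals tauto

theorem ssat_of_tsat {φ : TForm σ ar δ dar} {X : Team M} (h : tsat RI DI φ X) :
    ∀ s ∈ X, ssat RI φ s := by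
  induction φ generalizing X with
  | rel | nrel | eq | neq => exact h
  | dep => exact fun _ _ => trivial
  | and φ ψ ihφ ihψ => exact fun s hs => ⟨ihφ h.1 s hs, ihψ h.2 s hs⟩
  | or φ ψ ihφ ihψ =>
    obtain ⟨Y, Z, rfl, hY, hZ⟩ := h
    rintro s (hs | hs)
    exacts [Or.inl (ihφ hY s hs), Or.inr (ihψ hZ s hs)]
  | ex v φ ih =>
    obtain ⟨H, hne, hφ⟩ := h
    intro s hs
    obtain ⟨m, hm⟩ := hne s hs
    exact ⟨m, ih hφ _ ⟨s, hs, m, hm, rfl⟩⟩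
  | all v φ ih => exact fun s hs m => ih h _ ⟨s, hs, m, rfl⟩

theorem tsat_of_forall_ssat {φ : TForm σ ar δ dar} (hφ : φ.isFO) {X : Team M}
    (h : ∀ s ∈ X, ssat RI φ s) : tsat RI DI φ X := by
  induction φ generalizing X with
  | rel | nrel | eq | neq => exact h
  | dep => exact hφ.elim
  | and φ ψ ihφ ihψ =>
    exact ⟨ihφ hφ.1 fun s hs => (h s hs).1, ihψ hφ.2 fun s hs => (h s hs).2⟩
  | or φ ψ ihφ ihψ =>
    refine ⟨{s ∈ X | ssat RI φ s}, {s ∈ X | ssat RI ψ s}, ?_, ihφ hφ.1 fun s hs => hs.2,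
      ihψ hφ.2 fun s hs => hs.2⟩
    ext s
    simp only [Set.mem_union, Set.mem_ofPred_eq, ← and_or_left]
    exact ⟨fun hs => ⟨hs, h s hs⟩, And.left⟩
  | ex v φ ih =>
    refine tsat_ex.2 ⟨fun s => {m | ssat RI φ (Function.update s v m)}, h, ?_⟩
    rw [Team.supplement_setOf_update]
    exact ih hφ fun s hs => hs.2
  | all v φ ih =>
    exact ih hφ (by rintro s' ⟨s, hs, m, rfl⟩; exact h s hs m)

theorem tsat_iff_forall_ssat {φ : TForm σ ar δ dar} (hφ : φ.isFO) {X : Team M} :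
    tsat RI DI φ X ↔ ∀ s ∈ X, ssat RI φ s :=
  ⟨ssat_of_tsat, tsat_of_forall_ssat hφ⟩

theorem tsat_of_subset_of_forall_ssat (hup : UpClosed DI) {φ : TForm σ ar δ dar} {X Y : Team M}
    (hY : tsat RI DI φ Y) (hYX : Y ⊆ X) (hX : ∀ s ∈ X, ssat RI φ s) : tsat RI DI φ X := by
  induction φ generalizing X Y with
  | rel | nrel | eq | neq => exact hX
  | dep d xs => exact hup d M _ _ (Team.rel_mono hYX xs) hY
  | and φ ψ ihφ ihψ =>
    exact ⟨ihφ hY.1 hYX fun s hs => (hX s hs).1, ihψ hY.2 hYX fun s hs => (hX s hs).2⟩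
  | or φ ψ ihφ ihψ =>
    obtain ⟨Y₁, Y₂, rfl, hY₁, hY₂⟩ := hY
    refine ⟨{s ∈ X | ssat RI φ s}, {s ∈ X | ssat RI ψ s}, ?_,
      ihφ hY₁ (fun s hs => ⟨hYX (.inl hs), ssat_of_tsat hY₁ s hs⟩) fun s hs => hs.2,
      ihψ hY₂ (fun s hs => ⟨hYX (.inr hs), ssat_of_tsat hY₂ s hs⟩) fun s hs => hs.2⟩
    ext s
    simp only [Set.mem_union, Set.mem_ofPred_eq, ← and_or_left]
    exact ⟨fun hs => ⟨hs, hX s hs⟩, And.left⟩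
  | ex v φ ih =>
    obtain ⟨H, -, hφ⟩ := tsat_ex.1 hY
    refine tsat_ex.2 ⟨fun s => {m | ssat RI φ (Function.update s v m)}, hX, ?_⟩
    rw [Team.supplement_setOf_update]
    refine ih hφ ?_ fun s hs => hs.2
    rintro s' ⟨s, hs, m, hm, rfl⟩
    exact ⟨⟨s, hYX hs, m, rfl⟩, ssat_of_tsat hφ _ ⟨s, hs, m, hm, rfl⟩⟩
  | all v φ ih =>
    exact ih hY (Team.duplicate_mono hYX v) (by rintro s' ⟨s, hs, m, rfl⟩; exact hX s hs m)

theorem tsat_restrict_iff {ψ θ : TForm σ ar δ dar} (hθ : θ.isFO) {X : Team M} :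
    tsat RI DI (ψ.restrict θ) X ↔ tsat RI DI ψ {s ∈ X | ssat RI θ s} := by
  constructor
  · rintro ⟨N, P, rfl, hN, hθP, hψP⟩
    convert hψP using 1
    ext s
    refine ⟨fun ⟨hs, hθs⟩ => hs.resolve_left fun hsN => ?_,
      fun hs => ⟨.inr hs, ssat_of_tsat hθP s hs⟩⟩
    exact (ssat_neg hθ s).1 (ssat_of_tsat hN s hsN) hθs
  · intro hψ
    refine ⟨{s ∈ X | ¬ ssat RI θ s}, {s ∈ X | ssat RI θ s}, ?_,
      tsat_of_forall_ssat (TForm.isFO_neg hθ) fun s hs => (ssat_neg hθ s).2 hs.2,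
      tsat_of_forall_ssat hθ fun s hs => hs.2, hψ⟩
    ext s
    simp only [Set.mem_union, Set.mem_ofPred_eq, ← and_or_left, or_comm, em, and_true]

theorem tsat_ex_iff_of_upClosed (hup : UpClosed DI) {v : ℕ} {φ : TForm σ ar δ dar}
    {X : Team M} :
    tsat RI DI (.ex v φ) X ↔
      (∀ s ∈ X, ∃ m, ssat RI φ (Function.update s v m)) ∧
        tsat RI DI φ {s' ∈ X.duplicate v | ssat RI φ s'} := by
  rw [tsat_ex]
  constructor
  · rintro ⟨H, hne, hφ⟩
    refine ⟨fun s hs => ?_, tsat_of_subset_of_forall_ssat hup hφ ?_ fun s hs => hs.2⟩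
    · obtain ⟨m, hm⟩ := hne s hs
      exact ⟨m, ssat_of_tsat hφ _ ⟨s, hs, m, hm, rfl⟩⟩
    · rintro s' ⟨s, hs, m, hm, rfl⟩
      exact ⟨⟨s, hs, m, rfl⟩, ssat_of_tsat hφ _ ⟨s, hs, m, hm, rfl⟩⟩
  · rintro ⟨hwit, hφ⟩
    refine ⟨fun s => {m | ssat RI φ (Function.update s v m)}, hwit, ?_⟩
    rwa [Team.supplement_setOf_update]

end Semantics

/-- **Existential quantifier elimination for upwards closed dependencies.**
`∃v φ ≡ (∃v φᶠ) ∧ ∀v (φ ↾ φᶠ)`. -/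
theorem ex_clean {σ : Type} {ar : σ → ℕ} {δ : Type} {dar : δ → ℕ} {M : Type}
    (RI : ∀ r : σ, Set (Fin (ar r) → M)) (DI : DepFam δ dar) (hup : UpClosed DI)
    (v : ℕ) (φ : TForm σ ar δ dar) (X : Team M) :
    tsat RI DI (.ex v φ) X ↔
      tsat RI DI (.and (.ex v φ.flatten) (.all v (φ.restrict φ.flatten))) X := by
  change _ ↔
    tsat RI DI (TForm.ex v φ).flatten X ∧ tsat RI DI (φ.restrict φ.flatten) (X.duplicate v)
  rw [tsat_ex_iff_of_upClosed hup, tsat_iff_forall_ssat (TForm.isFO_flatten _),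
    tsat_restrict_iff (TForm.isFO_flatten φ)]
  simp only [ssat_flatten, ssat]
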